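/- Let A be the Fell C*-algebra of a continuous Hilbert bundle over a locally compact Hausdorff space T. There exists a *-monomorphism β: A → K(Ω^Δ) (namely β = π_A ∘ δ_A) such that the composition γ ∘ β: A → Mloc(A), where γ: K(Ω^Δ) → Mloc(A) is the monomorphism compatible with the embeddings γ_I: A^I → M(I), is the canonical embedding of A into its local multiplier algebra (the composition of the canonical embedding A → M(A) with the canonical map M(A) → Mloc(A)). -/

import Mathlib

/- Common definitions: continuous Hilbert bundles and Fell (spatial continuous
trace) C*-algebras, following Fell (1961). -/

noncomputable section

/-- A vector field `ξ` is a local uniform limit of members of `S`. -/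
def LocUnifApprox {T : Type*} [TopologicalSpace T] {H : T → Type*}
    [∀ t, NormedAddCommGroup (H t)] (S : Set (∀ t, H t)) (ξ : ∀ t, H t) : Prop :=
  ∀ (t₀ : T) (ε : ℝ), 0 < ε → ∃ U : Set T, IsOpen U ∧ t₀ ∈ U ∧
    ∃ ω ∈ S, ∀ t ∈ U, ‖ω t - ξ t‖ < ε

/-- Axioms (I)-(IV) of a continuous Hilbert bundle `(T, {H t}, Ω)`. -/
structure IsCtsHilbertBundle {T : Type*} [TopologicalSpace T] {H : T → Type*}
    [∀ t, NormedAddCommGroup (H t)] [∀ t, InnerProductSpace ℂ (H t)]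
    (Ω : Set (∀ t, H t)) : Prop where
  /-- axiom (I): `Ω` is a `C(T)`-module (additive part) -/
  zero_mem : (fun t => (0 : H t)) ∈ Ω
  add_mem : ∀ ω ∈ Ω, ∀ ν ∈ Ω, (fun t => ω t + ν t) ∈ Ω
  /-- axiom (I): `C(T)`-action -/
  smul_mem : ∀ (f : C(T, ℂ)), ∀ ω ∈ Ω, (fun t => f t • ω t) ∈ Ω
  /-- axiom (II) -/
  full : ∀ (t : T) (v : H t), ∃ ω ∈ Ω, ω t = v
  /-- axiom (III) -/
  norm_continuous : ∀ ω ∈ Ω, Continuous fun t => ‖ω t‖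
  /-- axiom (IV) -/
  closed_locUnif : ∀ ξ : ∀ t, H t, LocUnifApprox Ω ξ → ξ ∈ Ω

variable {T : Type*} [TopologicalSpace T] {H : T → Type*}
  [∀ t, NormedAddCommGroup (H t)] [∀ t, InnerProductSpace ℂ (H t)]
  [∀ t, CompleteSpace (H t)]

/-- An operator field is weakly continuous w.r.t. the bundle `Ω`. -/
def WeaklyCts (Ω : Set (∀ t, H t)) (a : ∀ t, H t →L[ℂ] H t) : Prop :=
  ∀ ω₁ ∈ Ω, ∀ ω₂ ∈ Ω, Continuous fun t => (inner ℂ (a t (ω₁ t)) (ω₂ t) : ℂ)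

/-- An operator field is almost finite-dimensional w.r.t. the bundle `Ω`. -/
def AlmostFinDim (Ω : Set (∀ t, H t)) (a : ∀ t, H t →L[ℂ] H t) : Prop :=
  ∀ (t₀ : T) (ε : ℝ), 0 < ε → ∃ U : Set T, IsOpen U ∧ t₀ ∈ U ∧
    ∃ (n : ℕ) (ω : Fin n → ∀ t, H t), (∀ i, ω i ∈ Ω) ∧ ∀ t ∈ U,
      LinearIndependent ℂ (fun i => ω i t) ∧
      ∃ p : H t →L[ℂ] H t, IsIdempotentElem p ∧ IsSelfAdjoint p ∧
        LinearMap.range (p : H t →ₗ[ℂ] H t) = Submodule.span ℂ (Set.range fun i => ω i t) ∧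
        ‖p * a t * p - a t‖ < ε

/-- The Fell (spatial continuous-trace) C*-algebra `A(T, {H t}, Ω)`: all weakly
continuous, almost finite-dimensional operator fields whose pointwise norm
function lies in `C₀(T)`; a set of operator fields with pointwise operations. -/
def FellAlgebra (Ω : Set (∀ t, H t)) : Set (∀ t, H t →L[ℂ] H t) :=
  {a | WeaklyCts Ω a ∧ AlmostFinDim Ω a ∧ (Continuous fun t => ‖a t‖) ∧
    Filter.Tendsto (fun t => ‖a t‖) (Filter.cocompact T) (nhds 0)}

/-- `I` is a (closed, two-sided, star) ideal of the C*-algebra of operator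
fields `A` (with pointwise operations and supremum norm). -/
structure IsIdealOf (A I : Set (∀ t, H t →L[ℂ] H t)) : Prop where
  subset : I ⊆ A
  zero_mem : (0 : ∀ t, H t →L[ℂ] H t) ∈ I
  add_mem : ∀ a ∈ I, ∀ b ∈ I, a + b ∈ I
  smul_mem : ∀ (c : ℂ), ∀ a ∈ I, c • a ∈ I
  star_mem : ∀ a ∈ I, star a ∈ I
  mul_mem_left : ∀ a ∈ A, ∀ b ∈ I, a * b ∈ I
  mul_mem_right : ∀ a ∈ I, ∀ b ∈ A, a * b ∈ I
  norm_closed : ∀ a ∈ A, (∀ ε : ℝ, 0 < ε → ∃ b ∈ I, ∀ t, ‖a t - b t‖ < ε) → a ∈ I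

/-- `I` is an essential ideal of `A`: it has nonzero intersection with every
nonzero ideal of `A`. -/
def IsEssentialIdealOf (A I : Set (∀ t, H t →L[ℂ] H t)) : Prop :=
  IsIdealOf A I ∧
    ∀ J, IsIdealOf A J → (∃ b ∈ J, b ≠ 0) → ∃ c, c ∈ I ∧ c ∈ J ∧ c ≠ 0

/-- The open set `X^I ⊆ T` associated with an ideal `I`
(the complement of `Z^I = {t | b t = 0 ∀ b ∈ I}`). -/
def idealSupp (I : Set (∀ t, H t →L[ℂ] H t)) : Set T :=
  {t | ∃ b ∈ I, b t ≠ 0}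

/-- `Ω_b`: the bounded vector fields of the bundle. -/
def boundedFields (Ω : Set (∀ t, H t)) : Set (∀ t, H t) :=
  {ω | ω ∈ Ω ∧ ∃ M : ℝ, ∀ t, ‖ω t‖ ≤ M}

/-- The rank-one operator field `Θ_{ω,ν} : ξ ↦ ⟨ξ, ν⟩·ω` (inner product linear
in `ξ`, conjugate-linear in `ν`). -/
def rankOneField (ω ν : ∀ t, H t) : ∀ t, H t →L[ℂ] H t :=
  fun t => (innerSL ℂ (ν t)).smulRight (ω t)

/-- `F(S)`: finite sums of rank-one fields `Θ_{ω,ν}` with `ω, ν ∈ S`. -/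
def finRankFields (S : Set (∀ t, H t)) : Set (∀ t, H t →L[ℂ] H t) :=
  {a | ∃ (n : ℕ) (ω ν : Fin n → ∀ t, H t), (∀ i, ω i ∈ S) ∧ (∀ i, ν i ∈ S) ∧
    a = fun t => ∑ i, rankOneField (ω i) (ν i) t}

/-- An operator field `x` is strictly continuous with respect to a family `F`
of operator fields. -/
def StrictlyCts (F : Set (∀ t, H t →L[ℂ] H t)) (x : ∀ t, H t →L[ℂ] H t) : Prop :=
  ∀ (t₀ : T), ∀ a ∈ F, ∀ ε : ℝ, 0 < ε → ∃ U : Set T, IsOpen U ∧ t₀ ∈ U ∧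
    ∃ b ∈ F, ∀ t ∈ U, ‖(x t - b t) * a t‖ + ‖a t * (x t - b t)‖ < ε

/-- The concrete realisation (Akemann–Pedersen–Tomiyama) of the multiplier
algebra: bounded operator fields, strictly continuous w.r.t. `F`. -/
def MultSet (F : Set (∀ t, H t →L[ℂ] H t)) : Set (∀ t, H t →L[ℂ] H t) :=
  {x | (∃ C : ℝ, ∀ t, ‖x t‖ ≤ C) ∧ StrictlyCts F x}

/-- Conjugation of an operator by a unitary (linear isometric equivalence). -/
def conjCLM {E F : Type*} [NormedAddCommGroup E] [NormedAddCommGroup F]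
    [NormedSpace ℂ E] [NormedSpace ℂ F] (e : E ≃ₗᵢ[ℂ] F) (x : E →L[ℂ] E) :
    F →L[ℂ] F :=
  ((e.toContinuousLinearEquiv : E →L[ℂ] F).comp x).comp
    (e.symm.toContinuousLinearEquiv : F →L[ℂ] E)

end
noncomputable section

variable {T : Type} [TopologicalSpace T] {H : T → Type}
  [∀ t, NormedAddCommGroup (H t)] [∀ t, InnerProductSpace ℂ (H t)]
  [∀ t, CompleteSpace (H t)]

/-- The index set `I_ess(A)` of essential ideals of the Fell algebra of `Ω`
(directed by reverse inclusion). -/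
@[reducible] def EssIdeal (Ω : Set (∀ t, H t)) : Type _ :=
  {I : Set (∀ t, H t →L[ℂ] H t) // IsEssentialIdealOf (FellAlgebra Ω) I}

/-- `Ω^I`: the local uniform limits of the induced fields `E^I = bar '' Ω_b`. -/
def OmegaExt {βX : Type} {HI : βX → Type} [TopologicalSpace βX]
    [∀ u, NormedAddCommGroup (HI u)]
    (Ω : Set (∀ t, H t)) (bar : (∀ t, H t) → ∀ u, HI u) : Set (∀ u, HI u) :=
  {ν | LocUnifApprox (bar '' boundedFields Ω) ν}

end
noncomputable section

variable {T : Type} [TopologicalSpace T] {H : T → Type}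
  [∀ t, NormedAddCommGroup (H t)] [∀ t, InnerProductSpace ℂ (H t)]
  [∀ t, CompleteSpace (H t)]

/-- The concrete realisation of the multiplier algebra `M(I)` of an essential
ideal `I` (Akemann–Pedersen–Tomiyama, Proposition `mult alg`): bounded operator
fields on `X^I` (with fibres `H_t`, via the identifications `e`), strictly
continuous with respect to `F((Ω^I|_{X^I})₀)`. -/
def MultOfIdeal {βX : Type} [TopologicalSpace βX] {HI : βX → Type}
    [∀ u, NormedAddCommGroup (HI u)] [∀ u, InnerProductSpace ℂ (HI u)]
    [∀ u, CompleteSpace (HI u)]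
    (Ω : Set (∀ t, H t)) (X : Set T) (ι : X → βX)
    (bar : (∀ t, H t) → ∀ u, HI u)
    (e : ∀ x : X, H x.1 ≃ₗᵢ[ℂ] HI (ι x)) :
    Set (∀ x : X, H x.1 →L[ℂ] H x.1) :=
  MultSet (finRankFields
    {ω' : ∀ x : X, H x.1 | ∃ μ ∈ OmegaExt Ω bar,
      (∀ x : X, ω' x = (e x).symm (μ (ι x))) ∧
      Filter.Tendsto (fun x : X => ‖ω' x‖) (Filter.cocompact X) (nhds 0)})

end

/-!
Fibrewise, `β a s` is either `0` or the conjugate of `a x` by a unitary, so `β` is a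
*-homomorphism, and it is injective because `Φ_A` is onto. The analytic point is that `β a` is
compact: on the compact space `βX^A` the weakly continuous, almost finite-dimensional field
`δ_A a` is a uniform limit of finite sums of rank-one fields. Locally, if `p` projects onto the
span of fields `v₁, …, vₙ`, then `p a p = ∑ (G⁻¹ M G⁻¹)ᵢₖ ⟪vₖ, ·⟫ vᵢ` with `G` the Gram matrix of
the `vᵢ` and `Mₗⱼ = ⟪vₗ, a vⱼ⟫`, whose entries depend continuously on the point; a partition of
unity glues these local approximants. Finally `γ ∘ β` is the canonical embedding by the
compatibility of `γ` with `γ_A`, since `δ_A a` conjugated back by `e` is `a` on `X^A`.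
-/

open Filter Topology Set
open scoped InnerProductSpace

section UnitaryConjugation

variable {E F : Type*} [NormedAddCommGroup E] [NormedAddCommGroup F]
  [InnerProductSpace ℂ E] [InnerProductSpace ℂ F]

theorem conjCLM_eq_conjStarAlgEquiv [CompleteSpace E] [CompleteSpace F] (e : E ≃ₗᵢ[ℂ] F)
    (x : E →L[ℂ] E) : conjCLM e x = e.conjStarAlgEquiv x :=
  rfl

theorem conjCLM_symm_conjCLM (e : E ≃ₗᵢ[ℂ] F) (x : E →L[ℂ] E) :
    conjCLM e.symm (conjCLM e x) = x := by
  ext ξ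
  simp [conjCLM]

theorem conjCLM_injective (e : E ≃ₗᵢ[ℂ] F) : Function.Injective (conjCLM e) :=
  Function.LeftInverse.injective (g := conjCLM e.symm) (conjCLM_symm_conjCLM e)

theorem conjCLM_smulRight_innerSL (e : E ≃ₗᵢ[ℂ] F) (v w : E) :
    conjCLM e ((innerSL ℂ v).smulRight w) = (innerSL ℂ (e v)).smulRight (e w) := by
  ext ξ
  simp [conjCLM, ← e.inner_map_map v]

end UnitaryConjugation

section LocUnifApprox

theorem continuousAt_of_forall_dist_lt {α β : Type*} [TopologicalSpace α] [PseudoMetricSpace β]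
    {f : α → β} {x : α}
    (h : ∀ ε > 0, ∃ t ∈ 𝓝 x, ∃ F : α → β, ContinuousAt F x ∧ ∀ y ∈ t, dist (f y) (F y) < ε) :
    ContinuousAt f x :=
  continuousAt_of_locally_uniform_approx_of_continuousAt fun _ hu => by
    obtain ⟨ε, hε, hεu⟩ := Metric.mem_uniformity_dist.1 hu
    obtain ⟨t, ht, F, hF, hfF⟩ := h ε hε
    exact ⟨t, ht, F, hF, fun y hy => hεu (hfF y hy)⟩

theorem norm_inner_sub_inner_le {E : Type*} [SeminormedAddCommGroup E] [InnerProductSpace ℂ E]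
    (x y x' y' : E) :
    ‖⟪x, y⟫_ℂ - ⟪x', y'⟫_ℂ‖ ≤ ‖x - x'‖ * ‖y‖ + ‖x'‖ * ‖y - y'‖ := by
  calc ‖⟪x, y⟫_ℂ - ⟪x', y'⟫_ℂ‖ = ‖⟪x - x', y⟫_ℂ + ⟪x', y - y'⟫_ℂ‖ := by
        rw [inner_sub_left, inner_sub_right, sub_add_sub_cancel]
    _ ≤ _ := (norm_add_le _ _).trans (add_le_add (norm_inner_le_norm _ _) (norm_inner_le_norm _ _))

variable {Y : Type*} [TopologicalSpace Y] {HY : Y → Type*} [∀ u, NormedAddCommGroup (HY u)]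
  {S : Set (∀ u, HY u)} {ω ν : ∀ u, HY u}

theorem LocUnifApprox.of_mem (h : ω ∈ S) : LocUnifApprox S ω :=
  fun _ ε hε => ⟨univ, isOpen_univ, mem_univ _, ω, h, fun u _ => by simpa using hε⟩

theorem LocUnifApprox.continuous_norm (hS : ∀ μ ∈ S, Continuous fun u => ‖μ u‖)
    (hω : LocUnifApprox S ω) : Continuous fun u => ‖ω u‖ := by
  refine continuous_iff_continuousAt.2 fun u₀ => continuousAt_of_forall_dist_lt fun ε hε => ?_
  obtain ⟨U, hUo, hu₀, μ, hμ, hμω⟩ := hω u₀ ε hε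
  refine ⟨U, hUo.mem_nhds hu₀, fun u => ‖μ u‖, (hS μ hμ).continuousAt, fun u hu => ?_⟩
  rw [Real.dist_eq]
  exact (abs_norm_sub_norm_le _ _).trans_lt (by simpa [norm_sub_rev] using hμω u hu)

theorem LocUnifApprox.exists_norm_le [CompactSpace Y] (hS : ∀ μ ∈ S, Continuous fun u => ‖μ u‖)
    (hω : LocUnifApprox S ω) : ∃ C : ℝ, ∀ u, ‖ω u‖ ≤ C := by
  obtain ⟨C, hC⟩ := isCompact_univ.exists_bound_of_continuousOn (hω.continuous_norm hS).continuousOn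
  exact ⟨C, fun u => by simpa using hC u (mem_univ u)⟩

variable [∀ u, InnerProductSpace ℂ (HY u)]

theorem continuous_norm_of_continuous_inner_self (h : Continuous fun u => ⟪ω u, ω u⟫_ℂ) :
    Continuous fun u => ‖ω u‖ := by
  have hnorm : (fun u => ‖ω u‖) = fun u => √(⟪ω u, ω u⟫_ℂ).re :=
    funext fun u => norm_eq_sqrt_re_inner (𝕜 := ℂ) (ω u)
  rw [hnorm]
  exact (Complex.continuous_re.comp h).sqrt

theorem LocUnifApprox.continuous_inner
    (hS : ∀ μ ∈ S, ∀ μ' ∈ S, Continuous fun u => ⟪μ u, μ' u⟫_ℂ)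
    (hω : LocUnifApprox S ω) (hν : LocUnifApprox S ν) : Continuous fun u => ⟪ω u, ν u⟫_ℂ := by
  have hS_norm μ (hμ : μ ∈ S) := continuous_norm_of_continuous_inner_self (hS μ hμ μ hμ)
  refine continuous_iff_continuousAt.2 fun u₀ => continuousAt_of_forall_dist_lt fun ε hε => ?_
  set C := ‖ω u₀‖ + ‖ν u₀‖ + 2 with hC_def
  have hC : 0 < C := by positivity
  have hnear : ∀ᶠ u in 𝓝 u₀, ‖ω u‖ < ‖ω u₀‖ + 1 ∧ ‖ν u‖ < ‖ν u₀‖ + 1 :=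
    ((hω.continuous_norm hS_norm).continuousAt.eventually_lt continuousAt_const (by simp)).and
      ((hν.continuous_norm hS_norm).continuousAt.eventually_lt continuousAt_const (by simp))
  set δ := min 1 (ε / (2 * C))
  have hδ : 0 < δ := lt_min one_pos (by positivity)
  have hδ₁ : δ ≤ 1 := min_le_left _ _
  obtain ⟨U, hUo, hu₀U, μ, hμ, hμω⟩ := hω u₀ δ hδ
  obtain ⟨V, hVo, hu₀V, μ', hμ', hμ'ν⟩ := hν u₀ δ hδ
  refine ⟨_, inter_mem (inter_mem (hUo.mem_nhds hu₀U) (hVo.mem_nhds hu₀V)) hnear,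
    fun u => ⟪μ u, μ' u⟫_ℂ, (hS μ hμ μ' hμ').continuousAt, fun u ⟨⟨hu, hv⟩, hωu, hνu⟩ => ?_⟩
  have h₁ : ‖ω u - μ u‖ < δ := by rw [norm_sub_rev]; exact hμω u hu
  have h₂ : ‖ν u - μ' u‖ < δ := by rw [norm_sub_rev]; exact hμ'ν u hv
  have hμC : ‖μ u‖ < C := by
    have := norm_le_norm_add_norm_sub' (μ u) (ω u)
    rw [norm_sub_rev] at h₁
    linarith [norm_nonneg (ν u₀)]
  have hνC : ‖ν u‖ < C := by linarith [norm_nonneg (ω u₀)]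
  rw [dist_eq_norm]
  calc ‖⟪ω u, ν u⟫_ℂ - ⟪μ u, μ' u⟫_ℂ‖ ≤ ‖ω u - μ u‖ * ‖ν u‖ + ‖μ u‖ * ‖ν u - μ' u‖ :=
        norm_inner_sub_inner_le _ _ _ _
    _ < δ * C + C * δ := by
        gcongr
    _ ≤ ε := by
        have : δ ≤ ε / (2 * C) := min_le_right _ _
        rw [le_div_iff₀ (by positivity)] at this
        linarith

theorem LocUnifApprox.smul_continuous (hS_smul : ∀ (c : ℂ), ∀ μ ∈ S, (fun u => c • μ u) ∈ S)
    (hS_norm : ∀ μ ∈ S, Continuous fun u => ‖μ u‖) (hω : LocUnifApprox S ω) {h : Y → ℂ}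
    (hh : Continuous h) : LocUnifApprox S fun u => h u • ω u := by
  intro u₀ ε hε
  obtain ⟨U, hUo, hu₀U, μ, hμ, hμω⟩ := hω u₀ (ε / 2 / (‖h u₀‖ + 1)) (by positivity)
  have hVo : IsOpen {u | ‖h u₀ - h u‖ * ‖ω u‖ < ε / 2} :=
    isOpen_lt (((continuous_const (y := h u₀)).sub hh).norm.mul (hω.continuous_norm hS_norm))
      continuous_const
  refine ⟨U ∩ {u | ‖h u₀ - h u‖ * ‖ω u‖ < ε / 2}, hUo.inter hVo,
    ⟨hu₀U, by simpa using half_pos hε⟩, fun u => h u₀ • μ u, hS_smul _ μ hμ, fun u ⟨hu, hv⟩ => ?_⟩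
  have hfirst : ‖h u₀‖ * ‖μ u - ω u‖ ≤ ε / 2 := by
    calc ‖h u₀‖ * ‖μ u - ω u‖ ≤ (‖h u₀‖ + 1) * (ε / 2 / (‖h u₀‖ + 1)) := by
          gcongr
          · linarith
          · exact (hμω u hu).le
      _ = ε / 2 := by field_simp
  calc ‖h u₀ • μ u - h u • ω u‖ = ‖h u₀ • (μ u - ω u) + (h u₀ - h u) • ω u‖ := by
        rw [smul_sub, sub_smul, sub_add_sub_cancel]
    _ ≤ ‖h u₀‖ * ‖μ u - ω u‖ + ‖h u₀ - h u‖ * ‖ω u‖ := by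
        simpa only [norm_smul] using norm_add_le (h u₀ • (μ u - ω u)) ((h u₀ - h u) • ω u)
    _ < ε / 2 + ε / 2 := add_lt_add_of_le_of_lt hfirst hv
    _ = ε := add_halves ε

end LocUnifApprox

section FinRankFields

variable {T : Type*} {H : T → Type*} [∀ t, NormedAddCommGroup (H t)]
  [∀ t, InnerProductSpace ℂ (H t)] {S : Set (∀ t, H t)}

theorem zero_mem_finRankFields : 0 ∈ finRankFields S :=
  ⟨0, Fin.elim0, Fin.elim0, Fin.rec0, Fin.rec0, by ext; simp⟩

theorem add_mem_finRankFields {a b : ∀ t, H t →L[ℂ] H t} (ha : a ∈ finRankFields S)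
    (hb : b ∈ finRankFields S) : a + b ∈ finRankFields S := by
  obtain ⟨n, ω, ν, hω, hν, rfl⟩ := ha
  obtain ⟨m, ω', ν', hω', hν', rfl⟩ := hb
  refine ⟨n + m, Fin.append ω ω', Fin.append ν ν',
    Fin.addCases (by simpa using hω) (by simpa using hω'),
    Fin.addCases (by simpa using hν) (by simpa using hν'), ?_⟩
  ext t : 1
  simp [Fin.sum_univ_add]

theorem rankOneField_mem_finRankFields {ω ν : ∀ t, H t} (hω : ω ∈ S) (hν : ν ∈ S) :
    rankOneField ω ν ∈ finRankFields S :=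
  ⟨1, fun _ => ω, fun _ => ν, fun _ => hω, fun _ => hν, by ext; simp⟩

theorem sum_mem_finRankFields {ι : Type*} (s : Finset ι) {k : ι → ∀ t, H t →L[ℂ] H t}
    (hk : ∀ i ∈ s, k i ∈ finRankFields S) : ∑ i ∈ s, k i ∈ finRankFields S :=
  Finset.sum_induction k _ (fun _ _ => add_mem_finRankFields) zero_mem_finRankFields hk

variable {Z : Type*} {HZ : Z → Type*} [∀ z, NormedAddCommGroup (HZ z)]
  [∀ z, InnerProductSpace ℂ (HZ z)] [∀ t, CompleteSpace (H t)] [∀ z, CompleteSpace (HZ z)]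
  (φ : Z → T) (Ψ : ∀ z, H (φ z) ≃ₗᵢ[ℂ] HZ z) {S' : Set (∀ z, HZ z)}

theorem conj_comp_mem_finRankFields (hSS' : ∀ ν ∈ S, (fun z => Ψ z (ν (φ z))) ∈ S')
    {k : ∀ t, H t →L[ℂ] H t} (hk : k ∈ finRankFields S) :
    (fun z => conjCLM (Ψ z) (k (φ z))) ∈ finRankFields S' := by
  obtain ⟨n, ω, ν, hω, hν, rfl⟩ := hk
  refine ⟨n, fun i z => Ψ z (ω i (φ z)), fun i z => Ψ z (ν i (φ z)), fun i => hSS' _ (hω i),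
    fun i => hSS' _ (hν i), funext fun z => ?_⟩
  simp only [conjCLM_eq_conjStarAlgEquiv, map_sum]
  simp only [← conjCLM_eq_conjStarAlgEquiv, rankOneField, conjCLM_smulRight_innerSL]

theorem conj_comp_approx_finRankFields (hSS' : ∀ ν ∈ S, (fun z => Ψ z (ν (φ z))) ∈ S')
    {a : ∀ t, H t →L[ℂ] H t}
    (ha : ∀ ε > 0, ∃ k ∈ finRankFields S, ∀ t, ‖a t - k t‖ < ε) :
    ∀ ε > 0, ∃ k ∈ finRankFields S', ∀ z, ‖conjCLM (Ψ z) (a (φ z)) - k z‖ < ε := by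
  intro ε hε
  obtain ⟨k, hk, hak⟩ := ha ε hε
  refine ⟨_, conj_comp_mem_finRankFields φ Ψ hSS' hk, fun z => ?_⟩
  simpa only [conjCLM_eq_conjStarAlgEquiv, ← map_sub, StarAlgEquiv.norm_map] using hak (φ z)

end FinRankFields

theorem ContinuousLinearMap.smulRight_smul_right {R E F : Type*} [Monoid R] [AddCommGroup E]
    [Module ℂ E] [TopologicalSpace E] [AddCommGroup F] [Module ℂ F] [TopologicalSpace F]
    [ContinuousSMul ℂ F] [DistribMulAction R F] [SMulCommClass ℂ R F] [ContinuousConstSMul R F]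
    (f : E →L[ℂ] ℂ) (c : R) (x : F) : f.smulRight (c • x) = c • f.smulRight x := by
  ext ξ
  simp [smul_comm (f ξ) c x]

section Compression

open Matrix

variable {E : Type*} [NormedAddCommGroup E] [InnerProductSpace ℂ E] [CompleteSpace E]
  {ι : Type*} [Fintype ι] [DecidableEq ι]

/-- The coefficients of the compression `p a p` of `a` in the rank-one operators
`ξ ↦ ⟪v k, ξ⟫ • v i`, for `p` the orthogonal projection onto `span v`. -/
noncomputable def compressionMatrix (v : ι → E) (a : E →L[ℂ] E) : Matrix ι ι ℂ :=
  (gram ℂ v)⁻¹ * of (fun l j => ⟪v l, a (v j)⟫_ℂ) * (gram ℂ v)⁻¹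

variable {v : ι → E} {p : E →L[ℂ] E}

theorem apply_eq_sum_gram_inv_mulVec (hv : LinearIndependent ℂ v) (hp : IsIdempotentElem p)
    (hsa : IsSelfAdjoint p)
    (hr : LinearMap.range (p : E →ₗ[ℂ] E) = Submodule.span ℂ (Set.range v)) (ξ : E) :
    p ξ = ∑ i, ((gram ℂ v)⁻¹ *ᵥ fun k => ⟪v k, ξ⟫_ℂ) i • v i := by
  obtain ⟨c, hc⟩ : ∃ c : ι → ℂ, ∑ i, c i • v i = p ξ := by
    rw [← Submodule.mem_span_range_iff_exists_fun, ← hr]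
    exact LinearMap.mem_range_self _ ξ
  have hpv k : p (v k) = v k := by
    obtain ⟨y, hy⟩ : v k ∈ LinearMap.range (p : E →ₗ[ℂ] E) :=
      hr ▸ Submodule.subset_span (Set.mem_range_self k)
    rw [← hy]
    exact congr($(hp.eq) y)
  have hgram : (fun k => ⟪v k, ξ⟫_ℂ) = gram ℂ v *ᵥ c := funext fun k => by
    rw [← hpv k, ← hsa.adjoint_eq, ContinuousLinearMap.adjoint_inner_left, ← hc]
    simp [inner_sum, inner_smul_right, mulVec, dotProduct, mul_comm]
  have hG : IsUnit (gram ℂ v).det :=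
    isUnit_iff_ne_zero.2 (det_gram_ne_zero_iff_linearIndependent.2 hv)
  rw [hgram, mulVec_mulVec, nonsing_inv_mul _ hG, one_mulVec, hc]

theorem mul_mul_eq_sum_compressionMatrix_smul (hv : LinearIndependent ℂ v)
    (hp : IsIdempotentElem p) (hsa : IsSelfAdjoint p)
    (hr : LinearMap.range (p : E →ₗ[ℂ] E) = Submodule.span ℂ (Set.range v)) (a : E →L[ℂ] E) :
    p * a * p = ∑ i, ∑ k, compressionMatrix v a i k • (innerSL ℂ (v k)).smulRight (v i) := by
  ext ξ
  have hinner : (fun l => ⟪v l, a (p ξ)⟫_ℂ) =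
      of (fun l j => ⟪v l, a (v j)⟫_ℂ) *ᵥ ((gram ℂ v)⁻¹ *ᵥ fun k => ⟪v k, ξ⟫_ℂ) := by
    ext l
    simp [apply_eq_sum_gram_inv_mulVec hv hp hsa hr ξ, mulVec, dotProduct, mul_comm]
  calc (p * a * p) ξ = p (a (p ξ)) := rfl
    _ = ∑ i, (compressionMatrix v a *ᵥ fun k => ⟪v k, ξ⟫_ℂ) i • v i := by
        rw [apply_eq_sum_gram_inv_mulVec hv hp hsa hr (a (p ξ)), hinner, mulVec_mulVec,
          mulVec_mulVec, compressionMatrix]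
    _ = _ := by
        simp [mulVec, dotProduct, Finset.sum_smul, smul_smul]

end Compression

theorem norm_sub_sum_smul_le {E : Type*} [SeminormedAddCommGroup E] [NormedSpace ℝ E]
    {ι : Type*} {s : Finset ι} {w : ι → ℝ} {b : ι → E} {a : E} {ε : ℝ}
    (hw₀ : ∀ i ∈ s, 0 ≤ w i) (hw₁ : ∑ i ∈ s, w i = 1) (hb : ∀ i ∈ s, w i ≠ 0 → ‖a - b i‖ ≤ ε) :
    ‖a - ∑ i ∈ s, w i • b i‖ ≤ ε := by
  have hterm : ∀ i ∈ s, ‖w i • (a - b i)‖ ≤ w i * ε := fun i hi => by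
    rw [norm_smul, Real.norm_of_nonneg (hw₀ i hi)]
    rcases eq_or_ne (w i) 0 with h | h
    · simp [h]
    · exact mul_le_mul_of_nonneg_left (hb i hi h) (hw₀ i hi)
  calc ‖a - ∑ i ∈ s, w i • b i‖ = ‖∑ i ∈ s, w i • (a - b i)‖ := by
        simp only [smul_sub, Finset.sum_sub_distrib, ← Finset.sum_smul, hw₁, one_smul]
    _ ≤ ∑ i ∈ s, w i * ε := norm_sum_le_of_le s hterm
    _ = ε := by rw [← Finset.sum_mul, hw₁, one_mul]

theorem exists_finset_partitionOfUnity_isSubordinate {Y : Type*} [TopologicalSpace Y]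
    [CompactSpace Y] [T2Space Y] (U : Y → Set Y) (hUo : ∀ y, IsOpen (U y)) (hU : ∀ y, y ∈ U y) :
    ∃ (F : Finset Y) (φ : PartitionOfUnity F Y univ), φ.IsSubordinate fun j => U j := by
  obtain ⟨F, hF⟩ := isCompact_univ.elim_finite_subcover U hUo fun y _ => mem_iUnion.2 ⟨y, hU y⟩
  obtain ⟨φ, hφ⟩ := PartitionOfUnity.exists_isSubordinate isClosed_univ (fun j : F => U j)
    (fun j => hUo j) fun y hy => by
      obtain ⟨i, hi, hyi⟩ := mem_iUnion₂.1 (hF hy)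
      exact mem_iUnion.2 ⟨⟨i, hi⟩, hyi⟩
  exact ⟨F, φ, hφ⟩

section FellAlgebraApprox

open Matrix

variable {Y : Type*} [TopologicalSpace Y] {HY : Y → Type*} [∀ u, NormedAddCommGroup (HY u)]
  [∀ u, InnerProductSpace ℂ (HY u)]

theorem continuousAt_compressionMatrix {ι : Type*} [Fintype ι] [DecidableEq ι]
    {v : ι → ∀ u, HY u} {a : ∀ u, HY u →L[ℂ] HY u}
    (hG : Continuous fun u => gram ℂ fun i => v i u)
    (hM : Continuous fun u => of fun l j => ⟪v l u, a u (v j u)⟫_ℂ) {u₀ : Y}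
    (hv : LinearIndependent ℂ fun i => v i u₀) :
    ContinuousAt (fun u => compressionMatrix (fun i => v i u) (a u)) u₀ := by
  have hdet : (gram ℂ fun i => v i u₀).det ≠ 0 := det_gram_ne_zero_iff_linearIndependent.2 hv
  have hinv : ContinuousAt (fun u => (gram ℂ fun i => v i u)⁻¹) u₀ :=
    ContinuousAt.comp (g := Inv.inv)
      (continuousAt_matrix_inv _ (NormedRing.inverse_continuousAt (Units.mk0 _ hdet)))
      hG.continuousAt
  exact (hinv.mul hM.continuousAt).mul hinv

variable [∀ u, CompleteSpace (HY u)] {a : ∀ u, HY u →L[ℂ] HY u}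

theorem AlmostFinDim.exists_local_approx {Ω : Set (∀ u, HY u)}
    (hΩ : ∀ μ ∈ Ω, ∀ μ' ∈ Ω, Continuous fun u => ⟪μ u, μ' u⟫_ℂ) (hwc : WeaklyCts Ω a)
    (hafd : AlmostFinDim Ω a) (u₀ : Y) {ε : ℝ} (hε : 0 < ε) :
    ∃ U : Set Y, IsOpen U ∧ u₀ ∈ U ∧ ∃ (n : ℕ) (v : Fin n → ∀ u, HY u), (∀ i, v i ∈ Ω) ∧
      ∀ u ∈ U, ContinuousAt (fun u => compressionMatrix (fun i => v i u) (a u)) u ∧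
        ‖a u - ∑ i, ∑ k, compressionMatrix (fun i => v i u) (a u) i k •
          (innerSL ℂ (v k u)).smulRight (v i u)‖ < ε := by
  obtain ⟨U, hUo, hu₀, n, v, hv, hU⟩ := hafd u₀ ε hε
  have hG : Continuous fun u => gram ℂ fun i => v i u :=
    continuous_matrix fun i k => hΩ _ (hv i) _ (hv k)
  have hM : Continuous fun u => of fun l j => ⟪v l u, a u (v j u)⟫_ℂ :=
    continuous_matrix fun l j => (hwc _ (hv j) _ (hv l)).star.congr fun u => inner_conj_symm _ _
  refine ⟨U, hUo, hu₀, n, v, hv, fun u hu => ?_⟩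
  obtain ⟨hli, p, hp, hsa, hr, hpa⟩ := hU u hu
  refine ⟨continuousAt_compressionMatrix hG hM hli, ?_⟩
  rwa [← mul_mul_eq_sum_compressionMatrix_smul hli hp hsa hr, norm_sub_rev]

theorem exists_finRankFields_approx [CompactSpace Y] [T2Space Y] {S : Set (∀ u, HY u)}
    (hS_inner : ∀ μ ∈ S, ∀ μ' ∈ S, Continuous fun u => ⟪μ u, μ' u⟫_ℂ)
    (hS_smul : ∀ (c : ℂ), ∀ μ ∈ S, (fun u => c • μ u) ∈ S)
    (ha : a ∈ FellAlgebra {ν | LocUnifApprox S ν}) {ε : ℝ} (hε : 0 < ε) :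
    ∃ k ∈ finRankFields {ν | LocUnifApprox S ν}, ∀ u, ‖a u - k u‖ < ε := by
  have hS_norm μ (hμ : μ ∈ S) := continuous_norm_of_continuous_inner_self (hS_inner μ hμ μ hμ)
  choose U hUo hU n v hv hloc using fun u₀ =>
    AlmostFinDim.exists_local_approx (fun _ hμ _ hμ' => hμ.continuous_inner hS_inner hμ') ha.1
      ha.2.1 u₀ (half_pos hε)
  obtain ⟨F, φ, hφ⟩ := exists_finset_partitionOfUnity_isSubordinate U hUo hU
  set D := fun (j : F) u => compressionMatrix (fun i => v j i u) (a u)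
  -- `φ j • D j` is continuous although `D j` is only continuous on `U j ⊇ tsupport (φ j)`
  have hc (j : F) i k : Continuous fun u => φ j u • D j u i k :=
    φ.continuous_smul fun u hu =>
      (continuous_apply_apply i k).continuousAt.comp (hloc j u (hφ j hu)).1
  refine ⟨∑ j, ∑ i, ∑ k, rankOneField (fun u => (φ j u • D j u i k) • v j i u) (v j k),
    sum_mem_finRankFields _ fun j _ => sum_mem_finRankFields _ fun i _ =>
      sum_mem_finRankFields _ fun k _ => rankOneField_mem_finRankFields
        ((hv j i).smul_continuous hS_smul hS_norm (hc j i k)) (hv j k), fun u => ?_⟩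
  have hsum : (∑ j, ∑ i, ∑ k, rankOneField (fun u => (φ j u • D j u i k) • v j i u) (v j k)) u =
      ∑ j, φ j u • ∑ i, ∑ k, D j u i k • (innerSL ℂ (v j k u)).smulRight (v j i u) := by
    simp only [Finset.sum_apply, rankOneField, ContinuousLinearMap.smulRight_smul_right,
      smul_assoc, Finset.smul_sum]
  rw [hsum]
  refine lt_of_le_of_lt (norm_sub_sum_smul_le (fun j _ => φ.nonneg j u) ?_
    fun j _ hj => (hloc j u (hφ j (subset_tsupport _ hj))).2.le) (half_lt_self hε)
  rw [← finsum_eq_sum_of_fintype]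
  exact φ.sum_eq_one (mem_univ u)

theorem exists_finRankFields_approx_conj_comp [CompactSpace Y] [T2Space Y] {S : Set (∀ u, HY u)}
    (hS_inner : ∀ μ ∈ S, ∀ μ' ∈ S, Continuous fun u => ⟪μ u, μ' u⟫_ℂ)
    (hS_smul : ∀ (c : ℂ), ∀ μ ∈ S, (fun u => c • μ u) ∈ S)
    (ha : a ∈ FellAlgebra {ν | LocUnifApprox S ν}) {Z : Type*} [TopologicalSpace Z]
    {HZ : Z → Type*} [∀ z, NormedAddCommGroup (HZ z)] [∀ z, InnerProductSpace ℂ (HZ z)]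
    [∀ z, CompleteSpace (HZ z)] (φ : Z → Y) (Ψ : ∀ z, HY (φ z) ≃ₗᵢ[ℂ] HZ z)
    {G : Set (∀ z, HZ z)} (hG : ∀ ν, LocUnifApprox S ν → (fun z => Ψ z (ν (φ z))) ∈ G) :
    ∀ ε > 0, ∃ k ∈ finRankFields {ξ | (∃ M : ℝ, ∀ z, ‖ξ z‖ ≤ M) ∧ LocUnifApprox G ξ},
      ∀ z, ‖conjCLM (Ψ z) (a (φ z)) - k z‖ < ε := by
  have hS_norm μ (hμ : μ ∈ S) := continuous_norm_of_continuous_inner_self (hS_inner μ hμ μ hμ)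
  refine conj_comp_approx_finRankFields φ Ψ (fun ν hν => ?_)
    fun ε hε => exists_finRankFields_approx hS_inner hS_smul ha hε
  obtain ⟨C, hC⟩ := LocUnifApprox.exists_norm_le hS_norm hν
  exact ⟨⟨C, fun z => by simpa using hC (φ z)⟩, .of_mem (hG ν hν)⟩

end FellAlgebraApprox

def NonUnitalStarAlgHom.pi {R A : Type*} {ι : Type*} {B : ι → Type*} [Monoid R]
    [NonUnitalNonAssocSemiring A] [DistribMulAction R A] [Star A]
    [∀ i, NonUnitalNonAssocSemiring (B i)] [∀ i, DistribMulAction R (B i)] [∀ i, Star (B i)]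
    (f : ∀ i, A →⋆ₙₐ[R] B i) : A →⋆ₙₐ[R] ∀ i, B i where
  toFun a i := f i a
  map_smul' c a := funext fun i => map_smul (f i) c a
  map_zero' := funext fun i => map_zero (f i)
  map_add' a b := funext fun i => map_add (f i) a b
  map_mul' a b := funext fun i => map_mul (f i) a b
  map_star' a := funext fun i => map_star (f i) a

section ExtensionByZero

variable {T : Type*} {H : T → Type*} [∀ t, NormedAddCommGroup (H t)]
  [∀ t, InnerProductSpace ℂ (H t)]
  {Y : Type*} {K : Y → Type*} [∀ u, NormedAddCommGroup (K u)] [∀ u, InnerProductSpace ℂ (K u)]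
  {A : Set (∀ t, H t →L[ℂ] H t)}
  {δ : (∀ t, H t →L[ℂ] H t) → ∀ u, K u →L[ℂ] K u}

theorem exists_nonUnitalStarAlgHom_eqOn [∀ t, CompleteSpace (H t)] [∀ u, CompleteSpace (K u)]
    {X : Set T} {ι : X → Y} {e : ∀ x : X, H x.1 ≃ₗᵢ[ℂ] K (ι x)}
    (hval : ∀ a ∈ A, ∀ x, δ a (ι x) = conjCLM (e x) (a x.1))
    (hzero : ∀ a ∈ A, ∀ u, u ∉ range ι → δ a u = 0) (u : Y) :
    ∃ ρ : (∀ t, H t →L[ℂ] H t) →⋆ₙₐ[ℂ] (K u →L[ℂ] K u), EqOn (δ · u) ρ A := by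
  by_cases hu : u ∈ range ι
  · obtain ⟨x, rfl⟩ := hu
    exact ⟨(e x).conjStarAlgEquiv.toNonUnitalStarAlgHom.comp
      (Pi.evalNonUnitalStarAlgHom ℂ _ x.1), fun a ha => hval a ha x⟩
  · exact ⟨0, fun a ha => hzero a ha u hu⟩

theorem injOn_comp_of_apply_eq_conjCLM {ι : idealSupp A → Y}
    {e : ∀ x : idealSupp A, H x.1 ≃ₗᵢ[ℂ] K (ι x)}
    (hval : ∀ a ∈ A, ∀ x, δ a (ι x) = conjCLM (e x) (a x.1)) :
    InjOn (fun a (x : idealSupp A) => δ a (ι x)) A := by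
  intro a ha b hb hab
  funext t
  by_cases ht : t ∈ idealSupp A
  · apply conjCLM_injective (e ⟨t, ht⟩)
    rw [← hval a ha, ← hval b hb]
    exact congrFun hab ⟨t, ht⟩
  · have hvanish c (hc : c ∈ A) : c t = 0 := not_not.1 fun hct => ht ⟨c, hc, hct⟩
    rw [hvanish a ha, hvanish b hb]

end ExtensionByZero

theorem smul_mem_image_boundedFields {T : Type*} [TopologicalSpace T] {H : T → Type*}
    [∀ t, NormedAddCommGroup (H t)] [∀ t, InnerProductSpace ℂ (H t)] {Ω : Set (∀ t, H t)}
    (hΩ : IsCtsHilbertBundle Ω) {Y : Type*} {HY : Y → Type*} [∀ u, AddCommGroup (HY u)]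
    [∀ u, Module ℂ (HY u)] {bar : (∀ t, H t) → ∀ u, HY u}
    (hbar_smul : ∀ (c : ℂ), ∀ ω ∈ boundedFields Ω, bar (c • ω) = c • bar ω) (c : ℂ)
    {μ : ∀ u, HY u} (hμ : μ ∈ bar '' boundedFields Ω) :
    (fun u => c • μ u) ∈ bar '' boundedFields Ω := by
  obtain ⟨ω, ⟨hω, M, hM⟩, rfl⟩ := hμ
  refine ⟨c • ω, ⟨hΩ.smul_mem (.const T c) ω hω, ‖c‖ * M, fun t => ?_⟩,
    hbar_smul c ω ⟨hω, M, hM⟩⟩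
  rw [Pi.smul_apply, norm_smul]
  exact mul_le_mul_of_nonneg_left (hM t) (norm_nonneg c)

theorem beta_gives_canonical_embedding_general
    {T : Type} [TopologicalSpace T]
    {H : T → Type} [∀ t, NormedAddCommGroup (H t)] [∀ t, InnerProductSpace ℂ (H t)]
    [∀ t, CompleteSpace (H t)]
    (Ω : Set (∀ t, H t)) (hΩ : IsCtsHilbertBundle Ω)
    -- Stone–Čech data over every essential ideal:
    {βX : EssIdeal Ω → Type} [∀ I, TopologicalSpace (βX I)]
    [∀ I, CompactSpace (βX I)] [∀ I, T2Space (βX I)]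
    (ι : ∀ I : EssIdeal Ω, idealSupp I.1 → βX I)
    {HI : ∀ I : EssIdeal Ω, βX I → Type}
    [∀ I u, NormedAddCommGroup (HI I u)] [∀ I u, InnerProductSpace ℂ (HI I u)]
    [∀ I u, CompleteSpace (HI I u)]
    (bar : ∀ I : EssIdeal Ω, (∀ t, H t) → ∀ u, HI I u)
    (hbar_smul : ∀ I, ∀ (c : ℂ), ∀ ω ∈ boundedFields Ω, bar I (c • ω) = c • bar I ω)
    (hbar_inner_cont : ∀ I, ∀ ω ∈ boundedFields Ω, ∀ ν ∈ boundedFields Ω,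
      Continuous fun u => (inner ℂ (bar I ω u) (bar I ν u) : ℂ))
    -- the inverse limit `Δ = lim← βX^I` with canonical surjections `Φ_I`:
    {Δ : Type} [TopologicalSpace Δ]
    (Φ : ∀ I : EssIdeal Ω, Δ → βX I)
    (hΦsurj : ∀ I, Function.Surjective (Φ I))
    -- the limit fibres `H_s^Δ` with canonical unitaries `Ψ_{I,s}`:
    {HΔ : Δ → Type} [∀ s, NormedAddCommGroup (HΔ s)]
    [∀ s, InnerProductSpace ℂ (HΔ s)] [∀ s, CompleteSpace (HΔ s)]
    (Ψ : ∀ (I : EssIdeal Ω) (s : Δ), HI I (Φ I s) ≃ₗᵢ[ℂ] HΔ s)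
    -- the identifications `H^I_{ι_I x} = H_x` for `x ∈ X^I`:
    (e : ∀ (I : EssIdeal Ω) (x : idealSupp I.1), H x.1 ≃ₗᵢ[ℂ] HI I (ι I x))
    -- `M_loc(A) = lim→ M(I)`: a C*-algebra `ML` with canonical isometric
    -- *-homomorphisms `π̃_I : M(I) → ML`, compatible with the connecting
    -- restriction maps `M(J) → M(I)` and with dense union of images:
    {ML : Type}
    (πt : ∀ I : EssIdeal Ω, (∀ x : idealSupp I.1, H x.1 →L[ℂ] H x.1) → ML)
    -- `A` is an essential ideal of itself; `A^A`, `δ_A : A → A^A`: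
    (hAess : IsEssentialIdealOf (FellAlgebra Ω) (FellAlgebra Ω))
    (δA : (∀ t, H t →L[ℂ] H t) → ∀ u, HI ⟨FellAlgebra Ω, hAess⟩ u →L[ℂ]
      HI ⟨FellAlgebra Ω, hAess⟩ u)
    (hδA_mem : ∀ a ∈ FellAlgebra Ω, δA a ∈
      FellAlgebra (OmegaExt Ω (bar ⟨FellAlgebra Ω, hAess⟩)))
    (hδA_val : ∀ a ∈ FellAlgebra Ω, ∀ x : idealSupp (FellAlgebra Ω),
      δA a (ι ⟨FellAlgebra Ω, hAess⟩ x) =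
        conjCLM (e ⟨FellAlgebra Ω, hAess⟩ x) (a x.1))
    (hδA_zero : ∀ a ∈ FellAlgebra Ω, ∀ u, u ∉ Set.range (ι ⟨FellAlgebra Ω, hAess⟩) →
      δA a u = 0)
    -- `γ : K(Ω^Δ) → M_loc(A)`, the monomorphism of Theorem `k-omega`,
    -- compatible with the canonical embeddings `γ_I : A^I → M(I)`:
    (γ : (∀ s, HΔ s →L[ℂ] HΔ s) → ML)
    (hγ_compat : ∀ (I : EssIdeal Ω), ∀ a ∈ FellAlgebra (OmegaExt Ω (bar I)),
      γ (fun s => conjCLM (Ψ I s) (a (Φ I s))) =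
        πt I fun x => conjCLM (e I x).symm (a (ι I x))) :
    -- conclusion: `β = π_A ∘ δ_A : A → K(Ω^Δ)` is a *-monomorphism and
    -- `γ ∘ β` is the canonical embedding `A → M_loc(A)`:
    let ΩΔ : Set (∀ s, HΔ s) :=
      {ξ | (∃ M : ℝ, ∀ s, ‖ξ s‖ ≤ M) ∧
        LocUnifApprox
          {μ : ∀ s, HΔ s | ∃ (I : EssIdeal Ω) (ν : ∀ u, HI I u),
            ν ∈ OmegaExt Ω (bar I) ∧ μ = fun s => Ψ I s (ν (Φ I s))} ξ}
    let KΩ : Set (∀ s, HΔ s →L[ℂ] HΔ s) :=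
      {b | ∀ ε : ℝ, 0 < ε → ∃ k ∈ finRankFields ΩΔ, ∀ s, ‖b s - k s‖ < ε}
    let β : (∀ t, H t →L[ℂ] H t) → ∀ s, HΔ s →L[ℂ] HΔ s := fun a s =>
      conjCLM (Ψ ⟨FellAlgebra Ω, hAess⟩ s) (δA a (Φ ⟨FellAlgebra Ω, hAess⟩ s))
    (∀ a ∈ FellAlgebra Ω, β a ∈ KΩ) ∧
    (∀ a ∈ FellAlgebra Ω, ∀ b ∈ FellAlgebra Ω, β (a + b) = β a + β b) ∧
    (∀ (c : ℂ), ∀ a ∈ FellAlgebra Ω, β (c • a) = c • β a) ∧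
    (∀ a ∈ FellAlgebra Ω, ∀ b ∈ FellAlgebra Ω, β (a * b) = β a * β b) ∧
    (∀ a ∈ FellAlgebra Ω, β (star a) = star (β a)) ∧
    (∀ a ∈ FellAlgebra Ω, ∀ b ∈ FellAlgebra Ω, β a = β b → a = b) ∧
    (∀ a ∈ FellAlgebra Ω,
      γ (β a) = πt ⟨FellAlgebra Ω, hAess⟩ fun x : idealSupp (FellAlgebra Ω) => a x.1) := by
  intro ΩΔ KΩ β
  let A : EssIdeal Ω := ⟨FellAlgebra Ω, hAess⟩
  have hS_inner : ∀ μ ∈ bar A '' boundedFields Ω, ∀ μ' ∈ bar A '' boundedFields Ω,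
      Continuous fun u => ⟪μ u, μ' u⟫_ℂ := by
    rintro _ ⟨ω, hω, rfl⟩ _ ⟨ν, hν, rfl⟩
    exact hbar_inner_cont A ω hω ν hν
  obtain ⟨ρ, hρ⟩ : ∃ ρ : (∀ t, H t →L[ℂ] H t) →⋆ₙₐ[ℂ] (∀ s, HΔ s →L[ℂ] HΔ s),
      EqOn β ρ (FellAlgebra Ω) := by
    choose ρ hρ using fun s => exists_nonUnitalStarAlgHom_eqOn hδA_val hδA_zero (Φ A s)
    exact ⟨.pi fun s => (Ψ A s).conjStarAlgEquiv.toNonUnitalStarAlgHom.comp (ρ s),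
      fun a ha => funext fun s => congrArg (conjCLM (Ψ A s)) (hρ s ha)⟩
  have hI := hAess.1
  refine ⟨fun a ha => ?_, fun a ha b hb => ?_, fun c a ha => ?_, fun a ha b hb => ?_,
    fun a ha => ?_, fun a ha b hb hab => ?_, fun a ha => ?_⟩
  · exact exists_finRankFields_approx_conj_comp hS_inner
      (fun c μ hμ => smul_mem_image_boundedFields hΩ (hbar_smul A) c hμ) (hδA_mem a ha) (Φ A)
      (Ψ A) fun ν hν => ⟨A, ν, hν, rfl⟩
  · rw [hρ (hI.add_mem a ha b hb), hρ ha, hρ hb, map_add]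
  · rw [hρ (hI.smul_mem c a ha), hρ ha, map_smul]
  · rw [hρ (hI.mul_mem_right a ha b hb), hρ ha, hρ hb, map_mul]
  · rw [hρ (hI.star_mem a ha), hρ ha, map_star]
  · refine injOn_comp_of_apply_eq_conjCLM hδA_val ha hb (funext fun x => ?_)
    obtain ⟨s, hs⟩ := hΦsurj A (ι A x)
    have hδ := conjCLM_injective _ (congrFun hab s)
    rwa [hs] at hδ
  · refine (hγ_compat A (δA a) (hδA_mem a ha)).trans (congrArg (πt A) (funext fun x => ?_))
    rw [hδA_val a ha x, conjCLM_symm_conjCLM]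

/-- Theorem `a-komega-mloc inclusion`.  There exists a
*-monomorphism `β = π_A ∘ δ_A : A → K(Ω^Δ)` such that `γ ∘ β : A → M_loc(A)` is
the canonical embedding of `A` into its local multiplier algebra (the
composition of `A → M(A)`, `a ↦ a|_{X^A}`, with the canonical map
`π̃_A : M(A) → M_loc(A)`). -/
theorem beta_gives_canonical_embedding
    {T : Type} [TopologicalSpace T] [LocallyCompactSpace T] [T2Space T]
    {H : T → Type} [∀ t, NormedAddCommGroup (H t)] [∀ t, InnerProductSpace ℂ (H t)]
    [∀ t, CompleteSpace (H t)]
    (Ω : Set (∀ t, H t)) (hΩ : IsCtsHilbertBundle Ω)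
    -- Stone–Čech data over every essential ideal:
    {βX : EssIdeal Ω → Type} [∀ I, TopologicalSpace (βX I)]
    [∀ I, CompactSpace (βX I)] [∀ I, T2Space (βX I)]
    (ι : ∀ I : EssIdeal Ω, idealSupp I.1 → βX I)
    (hι : ∀ I, Topology.IsEmbedding (ι I)) (hιd : ∀ I, DenseRange (ι I))
    {HI : ∀ I : EssIdeal Ω, βX I → Type}
    [∀ I u, NormedAddCommGroup (HI I u)] [∀ I u, InnerProductSpace ℂ (HI I u)]
    [∀ I u, CompleteSpace (HI I u)]
    (bar : ∀ I : EssIdeal Ω, (∀ t, H t) → ∀ u, HI I u)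
    (hbar_add : ∀ I, ∀ ω ∈ boundedFields Ω, ∀ ν ∈ boundedFields Ω,
      bar I (ω + ν) = bar I ω + bar I ν)
    (hbar_smul : ∀ I, ∀ (c : ℂ), ∀ ω ∈ boundedFields Ω, bar I (c • ω) = c • bar I ω)
    (hbar_inner_cont : ∀ I, ∀ ω ∈ boundedFields Ω, ∀ ν ∈ boundedFields Ω,
      Continuous fun u => (inner ℂ (bar I ω u) (bar I ν u) : ℂ))
    (hbar_inner_eq : ∀ I, ∀ ω ∈ boundedFields Ω, ∀ ν ∈ boundedFields Ω,
      ∀ x : idealSupp I.1, (inner ℂ (bar I ω (ι I x)) (bar I ν (ι I x)) : ℂ) =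
        (inner ℂ (ω x.1) (ν x.1) : ℂ))
    (hbar_dense : ∀ I (u : βX I) (v : HI I u) (ε : ℝ), 0 < ε →
      ∃ ω ∈ boundedFields Ω, ‖bar I ω u - v‖ < ε)
    -- the connecting maps `Φ_{JI} : βX^I → βX^J` (for `I ⊆ J`):
    (hXmono : ∀ I J : EssIdeal Ω, I.1 ⊆ J.1 →
      (idealSupp I.1 : Set T) ⊆ idealSupp J.1)
    (Φmap : ∀ I J : EssIdeal Ω, I.1 ⊆ J.1 → βX I → βX J)
    (hΦmap_cont : ∀ I J h, Continuous (Φmap I J h))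
    (hΦmap_ι : ∀ I J (h : I.1 ⊆ J.1) (x : idealSupp I.1),
      Φmap I J h (ι I x) = ι J (Set.inclusion (hXmono I J h) x))
    -- the inverse limit `Δ = lim← βX^I` with canonical surjections `Φ_I`:
    {Δ : Type} [TopologicalSpace Δ] [CompactSpace Δ] [T2Space Δ]
    (Φ : ∀ I : EssIdeal Ω, Δ → βX I)
    (hΦcont : ∀ I, Continuous (Φ I)) (hΦsurj : ∀ I, Function.Surjective (Φ I))
    (hΦcompat : ∀ I J (h : I.1 ⊆ J.1) (s : Δ), Φmap I J h (Φ I s) = Φ J s)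
    (hΦsep : ∀ s s' : Δ, (∀ I, Φ I s = Φ I s') → s = s')
    (hΦlim : ∀ x : ∀ I : EssIdeal Ω, βX I,
      (∀ I J (h : I.1 ⊆ J.1), Φmap I J h (x I) = x J) → ∃ s : Δ, ∀ I, Φ I s = x I)
    (hbasis : ∀ W : Set Δ, IsOpen W → ∀ s ∈ W, ∃ (I : EssIdeal Ω) (V : Set (βX I)),
      IsOpen V ∧ s ∈ Φ I ⁻¹' V ∧ Φ I ⁻¹' V ⊆ W)
    -- the limit fibres `H_s^Δ` with canonical unitaries `Ψ_{I,s}`: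
    {HΔ : Δ → Type} [∀ s, NormedAddCommGroup (HΔ s)]
    [∀ s, InnerProductSpace ℂ (HΔ s)] [∀ s, CompleteSpace (HΔ s)]
    (Ψ : ∀ (I : EssIdeal Ω) (s : Δ), HI I (Φ I s) ≃ₗᵢ[ℂ] HΔ s)
    (hΨcompat : ∀ I J (h : I.1 ⊆ J.1) (s : Δ), ∀ ω ∈ boundedFields Ω,
      Ψ I s (bar I ω (Φ I s)) = Ψ J s (bar J ω (Φ J s)))
    (hΨdense : ∀ (s : Δ) (v : HΔ s) (ε : ℝ), 0 < ε →
      ∃ (I : EssIdeal Ω) (ν : ∀ u, HI I u), ν ∈ OmegaExt Ω (bar I) ∧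
        ‖Ψ I s (ν (Φ I s)) - v‖ < ε)
    -- the identifications `H^I_{ι_I x} = H_x` for `x ∈ X^I`:
    (e : ∀ (I : EssIdeal Ω) (x : idealSupp I.1), H x.1 ≃ₗᵢ[ℂ] HI I (ι I x))
    (hbar_e : ∀ (I : EssIdeal Ω), ∀ ω ∈ boundedFields Ω, ∀ x : idealSupp I.1,
      (e I x).symm (bar I ω (ι I x)) = ω x.1)
    -- `M_loc(A) = lim→ M(I)`: a C*-algebra `ML` with canonical isometric
    -- *-homomorphisms `π̃_I : M(I) → ML`, compatible with the connecting
    -- restriction maps `M(J) → M(I)` and with dense union of images: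
    {ML : Type} [NormedRing ML] [StarRing ML] [CStarRing ML]
    [NormedAlgebra ℂ ML] [CompleteSpace ML] [StarModule ℂ ML]
    (πt : ∀ I : EssIdeal Ω, (∀ x : idealSupp I.1, H x.1 →L[ℂ] H x.1) → ML)
    (hπt_add : ∀ (I : EssIdeal Ω), ∀ x ∈ MultOfIdeal Ω (idealSupp I.1) (ι I) (bar I) (e I),
      ∀ y ∈ MultOfIdeal Ω (idealSupp I.1) (ι I) (bar I) (e I),
      πt I (x + y) = πt I x + πt I y)
    (hπt_smul : ∀ (I : EssIdeal Ω), ∀ (c : ℂ), ∀ x ∈ MultOfIdeal Ω (idealSupp I.1) (ι I) (bar I) (e I),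
      πt I (c • x) = c • πt I x)
    (hπt_mul : ∀ (I : EssIdeal Ω), ∀ x ∈ MultOfIdeal Ω (idealSupp I.1) (ι I) (bar I) (e I),
      ∀ y ∈ MultOfIdeal Ω (idealSupp I.1) (ι I) (bar I) (e I),
      πt I (x * y) = πt I x * πt I y)
    (hπt_star : ∀ (I : EssIdeal Ω), ∀ x ∈ MultOfIdeal Ω (idealSupp I.1) (ι I) (bar I) (e I),
      πt I (star x) = star (πt I x))
    (hπt_isom : ∀ (I : EssIdeal Ω), ∀ x ∈ MultOfIdeal Ω (idealSupp I.1) (ι I) (bar I) (e I),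
      ‖πt I x‖ = ⨆ t : idealSupp I.1, ‖x t‖)
    (hπt_compat : ∀ (I J : EssIdeal Ω) (h : I.1 ⊆ J.1),
      ∀ x ∈ MultOfIdeal Ω (idealSupp J.1) (ι J) (bar J) (e J),
      πt J x = πt I fun t => x ⟨t.1, hXmono I J h t.2⟩)
    (hπt_dense : ∀ (z : ML) (ε : ℝ), 0 < ε → ∃ (I : EssIdeal Ω),
      ∃ x ∈ MultOfIdeal Ω (idealSupp I.1) (ι I) (bar I) (e I), ‖z - πt I x‖ < ε)
    -- `A` is an essential ideal of itself; `A^A`, `δ_A : A → A^A`: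
    (hAess : IsEssentialIdealOf (FellAlgebra Ω) (FellAlgebra Ω))
    (δA : (∀ t, H t →L[ℂ] H t) → ∀ u, HI ⟨FellAlgebra Ω, hAess⟩ u →L[ℂ]
      HI ⟨FellAlgebra Ω, hAess⟩ u)
    (hδA_mem : ∀ a ∈ FellAlgebra Ω, δA a ∈
      FellAlgebra (OmegaExt Ω (bar ⟨FellAlgebra Ω, hAess⟩)))
    (hδA_val : ∀ a ∈ FellAlgebra Ω, ∀ x : idealSupp (FellAlgebra Ω),
      δA a (ι ⟨FellAlgebra Ω, hAess⟩ x) =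
        conjCLM (e ⟨FellAlgebra Ω, hAess⟩ x) (a x.1))
    (hδA_zero : ∀ a ∈ FellAlgebra Ω, ∀ u, u ∉ Set.range (ι ⟨FellAlgebra Ω, hAess⟩) →
      δA a u = 0)
    -- `γ : K(Ω^Δ) → M_loc(A)`, the monomorphism of Theorem `k-omega`,
    -- compatible with the canonical embeddings `γ_I : A^I → M(I)`:
    (γ : (∀ s, HΔ s →L[ℂ] HΔ s) → ML)
    (hγ_inj : ∀ a ∈ {b : ∀ s, HΔ s →L[ℂ] HΔ s | ∀ ε : ℝ, 0 < ε →
        ∃ k ∈ finRankFields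
          {ξ : ∀ s, HΔ s | (∃ M : ℝ, ∀ s, ‖ξ s‖ ≤ M) ∧
            LocUnifApprox
              {μ : ∀ s, HΔ s | ∃ (I : EssIdeal Ω) (ν : ∀ u, HI I u),
                ν ∈ OmegaExt Ω (bar I) ∧ μ = fun s => Ψ I s (ν (Φ I s))} ξ},
          ∀ s, ‖a s - k s‖ < ε},
      ∀ b ∈ {b : ∀ s, HΔ s →L[ℂ] HΔ s | ∀ ε : ℝ, 0 < ε →
        ∃ k ∈ finRankFields
          {ξ : ∀ s, HΔ s | (∃ M : ℝ, ∀ s, ‖ξ s‖ ≤ M) ∧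
            LocUnifApprox
              {μ : ∀ s, HΔ s | ∃ (I : EssIdeal Ω) (ν : ∀ u, HI I u),
                ν ∈ OmegaExt Ω (bar I) ∧ μ = fun s => Ψ I s (ν (Φ I s))} ξ},
          ∀ s, ‖a s - k s‖ < ε},
      γ a = γ b → a = b)
    (hγ_compat : ∀ (I : EssIdeal Ω), ∀ a ∈ FellAlgebra (OmegaExt Ω (bar I)),
      γ (fun s => conjCLM (Ψ I s) (a (Φ I s))) =
        πt I fun x => conjCLM (e I x).symm (a (ι I x))) :
    -- conclusion: `β = π_A ∘ δ_A : A → K(Ω^Δ)` is a *-monomorphism and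
    -- `γ ∘ β` is the canonical embedding `A → M_loc(A)`:
    let ΩΔ : Set (∀ s, HΔ s) :=
      {ξ | (∃ M : ℝ, ∀ s, ‖ξ s‖ ≤ M) ∧
        LocUnifApprox
          {μ : ∀ s, HΔ s | ∃ (I : EssIdeal Ω) (ν : ∀ u, HI I u),
            ν ∈ OmegaExt Ω (bar I) ∧ μ = fun s => Ψ I s (ν (Φ I s))} ξ}
    let KΩ : Set (∀ s, HΔ s →L[ℂ] HΔ s) :=
      {b | ∀ ε : ℝ, 0 < ε → ∃ k ∈ finRankFields ΩΔ, ∀ s, ‖b s - k s‖ < ε}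
    let β : (∀ t, H t →L[ℂ] H t) → ∀ s, HΔ s →L[ℂ] HΔ s := fun a s =>
      conjCLM (Ψ ⟨FellAlgebra Ω, hAess⟩ s) (δA a (Φ ⟨FellAlgebra Ω, hAess⟩ s))
    (∀ a ∈ FellAlgebra Ω, β a ∈ KΩ) ∧
    (∀ a ∈ FellAlgebra Ω, ∀ b ∈ FellAlgebra Ω, β (a + b) = β a + β b) ∧
    (∀ (c : ℂ), ∀ a ∈ FellAlgebra Ω, β (c • a) = c • β a) ∧
    (∀ a ∈ FellAlgebra Ω, ∀ b ∈ FellAlgebra Ω, β (a * b) = β a * β b) ∧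
    (∀ a ∈ FellAlgebra Ω, β (star a) = star (β a)) ∧
    (∀ a ∈ FellAlgebra Ω, ∀ b ∈ FellAlgebra Ω, β a = β b → a = b) ∧
    (∀ a ∈ FellAlgebra Ω,
      γ (β a) = πt ⟨FellAlgebra Ω, hAess⟩ fun x : idealSupp (FellAlgebra Ω) => a x.1) :=
  beta_gives_canonical_embedding_general Ω hΩ ι bar hbar_smul hbar_inner_cont Φ hΦsurj Ψ e πt hAess
    δA hδA_mem hδA_val hδA_zero γ hγ_compat
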